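/- Suppose Φ is an α-potential function for (V^i) and θ* maximizes Φ(x,·) exactly. Then the Nash regret of each player i at θ*, defined as sup_{θ^i} V^i(x, θ^i, θ*^{-i}) − V^i(x, θ*^i, θ*^{-i}), is nonnegative and at most α. -/
import Mathlib

def IsAlphaPotential {X ι : Type*} [DecidableEq ι] {Θ : ι → Type*}
    (V : ι → X → (∀ i, Θ i) → ℝ) (Φ : X → (∀ i, Θ i) → ℝ) (α : ℝ) : Prop :=
  ∀ (x : X) (i : ι) (θ : ∀ j, Θ j) (θi' : Θ i),
    |(Φ x θ - Φ x (Function.update θ i θi')) -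
      (V i x θ - V i x (Function.update θ i θi'))| ≤ α

/-- If θ* exactly maximizes an α-potential function, each player's Nash regret
sup_{θ^i} V^i(x, θ^i, θ*^{-i}) − V^i(x, θ*) is in [0, α]. -/
theorem nash_regret_le_alpha
    {X ι : Type*} [DecidableEq ι] {Θ : ι → Type*}
    (V : ι → X → (∀ i, Θ i) → ℝ) (Φ : X → (∀ i, Θ i) → ℝ) (α : ℝ)
    (hΦ : IsAlphaPotential V Φ α)
    (x : X) (θstar : ∀ j, Θ j)
    (hmax : ∀ θ : ∀ j, Θ j, Φ x θstar ≥ Φ x θ)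
    (i : ι)
    (hbdd : BddAbove (Set.range fun θi : Θ i => V i x (Function.update θstar i θi))) :
    0 ≤ (⨆ θi : Θ i, V i x (Function.update θstar i θi)) - V i x θstar ∧
      (⨆ θi : Θ i, V i x (Function.update θstar i θi)) - V i x θstar ≤ α := by
  have hself : Function.update θstar i (θstar i) = θstar := Function.update_eq_self i θstar
  have : Nonempty (Θ i) := ⟨θstar i⟩
  constructor
  · have h := le_ciSup hbdd (θstar i)
    rw [hself] at h
    linarith
  · have hle : ∀ θi' : Θ i, V i x (Function.update θstar i θi') ≤ V i x θstar + α := by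
      intro θi'
      have h1 := hΦ x i θstar θi'
      have h2 := hmax (Function.update θstar i θi')
      rw [abs_le] at h1
      linarith [h1.1]
    have : (⨆ θi : Θ i, V i x (Function.update θstar i θi)) ≤ V i x θstar + α :=
      ciSup_le hle
    linarith
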